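/- arXiv:1511.00289 — 4 statements merged into one kernel-verified Lean document; each statement's English description precedes it below -/
import Mathlib

section
/- For a language R recognized by a DFA with finite state set Q, there exists ω ≥ 1 such that for every word w, the word w^ω is syntactically equivalent to w^(2ω) with respect to R. -/
/-- Syntactic equivalence of two words with respect to a language `R`. -/
def SynEq {α : Type*} (R : Set (List α)) (w w' : List α) : Prop :=
  ∀ v x : List α, v ++ w ++ x ∈ R ↔ v ++ w' ++ x ∈ R

/-- `wpow w n` is the `n`-fold concatenation of the word `w` with itself. -/
def wpow {α : Type*} (w : List α) : ℕ → List α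
  | 0 => []
  | n + 1 => w ++ wpow w n

/-!
The transition maps `q ↦ δ*(q, w)` live in the finite monoid of self-maps of the state set, and
`w ↦ δ*(·, w)` turns `w ^ n` into the `n`-th power of the transition map of `w`. In a finite
monoid with `N` elements, pigeonhole on `x ^ 0, …, x ^ N` gives `x ^ (i + p) = x ^ i` with
`i ≤ N` and `1 ≤ p ≤ N`; then `ω = N!` satisfies `i ≤ ω` and `p ∣ ω`, so `x ^ (2ω) = x ^ ω`
for every `x` at once. Words with the same transition map are syntactically equivalent.
-/

section Monoid

variable {M : Type*} [Monoid M]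

theorem pow_add_mul_eq_pow_of_pow_add_eq {x : M} {i p : ℕ} (h : x ^ (i + p) = x ^ i) (k : ℕ)
    {m : ℕ} (hm : i ≤ m) : x ^ (m + k * p) = x ^ m := by
  have periodic : x ^ (i + k * p) = x ^ i := by
    induction k with
    | zero => simp
    | succ k ih => rw [add_mul, one_mul, ← add_assoc, pow_add, ih, ← pow_add, h]
  obtain ⟨j, rfl⟩ := Nat.exists_eq_add_of_le hm
  rw [add_right_comm, pow_add, periodic, ← pow_add]

theorem exists_pow_add_eq_pow [Fintype M] (x : M) :
    ∃ i p, 0 < p ∧ i + p ≤ Fintype.card M ∧ x ^ (i + p) = x ^ i := by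
  obtain ⟨a, b, hne, heq⟩ := Fintype.exists_ne_map_eq_of_card_lt
    (fun k : Fin (Fintype.card M + 1) => x ^ (k : ℕ)) (by simp)
  wlog hab : a < b generalizing a b
  · exact this b a hne.symm heq.symm (lt_of_le_of_ne (not_lt.mp hab) hne.symm)
  refine ⟨a, b - a, by omega, by omega, ?_⟩
  rw [Nat.add_sub_cancel' (Fin.le_iff_val_le_val.mp hab.le)]
  exact heq.symm

theorem exists_pow_two_mul_eq_pow [Finite M] : ∃ ω, 1 ≤ ω ∧ ∀ x : M, x ^ (2 * ω) = x ^ ω := by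
  cases nonempty_fintype M
  refine ⟨(Fintype.card M).factorial, Nat.factorial_pos _, fun x => ?_⟩
  obtain ⟨i, p, hp, hip, hx⟩ := exists_pow_add_eq_pow x
  obtain ⟨k, hk⟩ := Nat.dvd_factorial hp (by omega : p ≤ Fintype.card M)
  have hi : i ≤ (Fintype.card M).factorial := (by omega : i ≤ _).trans (Nat.self_le_factorial _)
  have hω : 2 * (Fintype.card M).factorial = (Fintype.card M).factorial + k * p := by
    rw [hk]; ring
  rw [hω, pow_add_mul_eq_pow_of_pow_add_eq hx k hi]

end Monoid

namespace DFA

variable {α σ : Type*} (M : DFA α σ)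

theorem evalFrom_wpow (s : σ) (w : List α) (n : ℕ) :
    M.evalFrom s (wpow w n) = (fun q => M.evalFrom q w)^[n] s := by
  induction n generalizing s with
  | zero => rfl
  | succ n ih => rw [wpow, evalFrom_of_append, ih, Function.iterate_succ_apply]

theorem synEq_accepts_of_evalFrom_eq {u u' : List α} (h : ∀ s, M.evalFrom s u = M.evalFrom s u') :
    SynEq (M.accepts : Set (List α)) u u' := by
  intro v x
  change M.eval _ ∈ M.accept ↔ M.eval _ ∈ M.accept
  simp only [eval, evalFrom_of_append, h]

end DFA

/-- For a language recognized by a DFA with finitely many states, there is `ω ≥ 1`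
such that `w^ω` is syntactically equivalent to `w^(2ω)` for every word `w`. -/
theorem dfa_power_synEq {α σ : Type*} [Fintype σ] (M : DFA α σ) :
    ∃ ω : ℕ, 1 ≤ ω ∧ ∀ w : List α,
      SynEq (M.accepts : Set (List α)) (wpow w ω) (wpow w (2 * ω)) := by
  have : Finite (Function.End σ) := inferInstanceAs (Finite (σ → σ))
  obtain ⟨ω, hω, hpow⟩ := exists_pow_two_mul_eq_pow (M := Function.End σ)
  refine ⟨ω, hω, fun w => M.synEq_accepts_of_evalFrom_eq fun s => ?_⟩
  simp only [M.evalFrom_wpow]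
  exact (congr_fun (hpow fun q => M.evalFrom q w) s).symm
end

section
/- Let R be a language over Σ' and ≡ denote syntactic equivalence with respect to R. Suppose words e_L, e, e_R satisfy e_L·e_L ≡ e_L, e_R·e_R ≡ e_R, e·e_L ≡ e, and e_R·e ≡ e. Then for any letters t₁,…,t_n ∈ Σ' and exponents l₁ ≥ 1, r_n ≥ 1, and l₂,…,l_n, r₁,…,r_{n-1} ≥ 0, the word e_L^{l₁} t₁ e_R^{r₁} e e_L^{l₂} t₂ e_R^{r₂} e … e e_L^{l_n} t_n e_R^{r_n} is syntactically equivalent to e_L t₁ e t₂ e … e t_n e_R. -/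
/-!
Syntactic equivalence is a congruence, so the pumped word may be rewritten piece by piece.
The idempotents collapse the outer powers `e_L^{l₁}` and `e_R^{r_n}` to `e_L` and `e_R`, and the
absorption laws `e e_L ≡ e`, `e_R e ≡ e` collapse every junction `e_R^{rᵢ} e e_L^{lᵢ₊₁}` to `e`.
-/

namespace SynEq

variable {α : Type*} {R : Set (List α)} {w w' w'' u : List α}

@[refl]
theorem refl (w : List α) : SynEq R w w := fun _ _ => Iff.rfl

theorem trans (h : SynEq R w w') (h' : SynEq R w' w'') : SynEq R w w'' :=
  fun v x => (h v x).trans (h' v x)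

instance : Trans (SynEq R) (SynEq R) (SynEq R) := ⟨trans⟩

theorem append_left (u : List α) (h : SynEq R w w') : SynEq R (u ++ w) (u ++ w') := by
  intro v x
  simpa only [List.append_assoc] using h (v ++ u) x

theorem append_right (h : SynEq R w w') (u : List α) : SynEq R (w ++ u) (w' ++ u) := by
  intro v x
  simpa only [List.append_assoc] using h v (u ++ x)

theorem wpow_of_append_self (h : SynEq R (w ++ w) w) :
    ∀ {n : ℕ}, 1 ≤ n → SynEq R (wpow w n) w
  | 1, _ => by simp only [wpow, List.append_nil]; rfl
  | n + 2, _ =>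
    calc SynEq R (w ++ wpow w (n + 1)) (w ++ w) := (wpow_of_append_self h n.succ_pos).append_left w
      SynEq R _ _ := h

theorem append_wpow_of_append (h : SynEq R (u ++ w) u) :
    ∀ n : ℕ, SynEq R (u ++ wpow w n) u
  | 0 => by simp only [wpow, List.append_nil]; rfl
  | n + 1 =>
    calc SynEq R (u ++ (w ++ wpow w n)) (u ++ wpow w n) := by
          simpa only [List.append_assoc] using h.append_right (wpow w n)
      SynEq R _ _ := append_wpow_of_append h n

theorem wpow_append_of_append (h : SynEq R (w ++ u) u) :
    ∀ n : ℕ, SynEq R (wpow w n ++ u) u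
  | 0 => by simp only [wpow, List.nil_append]; rfl
  | n + 1 =>
    calc SynEq R (w ++ wpow w n ++ u) (w ++ u) := by
          simpa only [List.append_assoc] using (wpow_append_of_append h n).append_left w
      SynEq R _ _ := h

end SynEq

section Pumping

variable {α : Type*} {R : Set (List α)} {eL e eR : List α}

theorem synEq_intercalate_pumped (hRR : SynEq R (eR ++ eR) eR)
    (heL : SynEq R (e ++ eL) e) (hRe : SynEq R (eR ++ e) e) :
    ∀ (m : ℕ) (t : Fin (m + 1) → α) (l r : Fin (m + 1) → ℕ), 1 ≤ r (Fin.last m) →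
      SynEq R
        (List.intercalate e (List.ofFn fun i => wpow eL (l i) ++ [t i] ++ wpow eR (r i)))
        (wpow eL (l 0) ++ List.intercalate e (List.ofFn fun i => [t i]) ++ eR)
  | 0, t, l, r, hr => by
    simpa only [List.ofFn_succ, List.ofFn_zero, List.intercalate_singleton, Fin.last_zero] using
      (SynEq.wpow_of_append_self hRR hr).append_left (wpow eL (l 0) ++ [t 0])
  | m + 1, t, l, r, hr => by
    have ih := synEq_intercalate_pumped hRR heL hRe m (t ∘ Fin.succ) (l ∘ Fin.succ)
      (r ∘ Fin.succ) (by simpa only [Function.comp_apply, Fin.succ_last] using hr)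
    have junction : SynEq R (wpow eR (r 0) ++ e ++ wpow eL (l 1)) e :=
      ((SynEq.wpow_append_of_append hRe (r 0)).append_right _).trans
        (SynEq.append_wpow_of_append heL (l 1))
    rw [List.ofFn_succ, List.intercalate_cons_of_ne_nil (by simp), List.ofFn_succ (n := m + 1),
      List.intercalate_cons_of_ne_nil (by simp)]
    calc SynEq R (wpow eL (l 0) ++ [t 0] ++ wpow eR (r 0) ++ e ++ _)
          (wpow eL (l 0) ++ [t 0] ++ wpow eR (r 0) ++ e ++
            (wpow eL (l 1) ++ List.intercalate e (List.ofFn fun i => [t i.succ]) ++ eR)) :=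
          ih.append_left _
      SynEq R _ _ := by
          simpa only [List.append_assoc] using
            (junction.append_left (wpow eL (l 0) ++ [t 0])).append_right
              (List.intercalate e (List.ofFn fun i => [t i.succ]) ++ eR)

end Pumping

/-- If `e_L e_L ≡ e_L`, `e_R e_R ≡ e_R`, `e e_L ≡ e` and `e_R e ≡ e`, then
`e_L^{l₁} t₁ e_R^{r₁} e e_L^{l₂} t₂ e_R^{r₂} e … e e_L^{l_n} t_n e_R^{r_n}`
is syntactically equivalent to `e_L t₁ e t₂ e … e t_n e_R`, provided `l₁ ≥ 1`
and `r_n ≥ 1`. -/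
theorem pumped_word_synEq {α : Type*} (R : Set (List α)) (eL e eR : List α)
    (hLL : SynEq R (eL ++ eL) eL) (hRR : SynEq R (eR ++ eR) eR)
    (heL : SynEq R (e ++ eL) e) (hRe : SynEq R (eR ++ e) e)
    (m : ℕ) (t : Fin (m + 1) → α) (l r : Fin (m + 1) → ℕ)
    (hl : 1 ≤ l 0) (hr : 1 ≤ r (Fin.last m)) :
    SynEq R
      (List.intercalate e
        (List.ofFn fun i => wpow eL (l i) ++ [t i] ++ wpow eR (r i)))
      (eL ++ List.intercalate e (List.ofFn fun i => [t i]) ++ eR) :=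
  (synEq_intercalate_pumped hRR heL hRe m t l r hr).trans
    (((SynEq.wpow_of_append_self hLL hl).append_right _).append_right eR)
end

section
/- Let M be a monoid in which every element s satisfies s^(2ω) = s^ω for a fixed ω ≥ 1, and let o, h ∈ M with h = o² · c for some c ∈ M. Set ν = ω - 1, b₁ = (o^ν h^ν)^ω o^ν and e_L = o · b₁. Then e_L · e_L = e_L. -/
/-- In a monoid where every element satisfies `s^(2ω) = s^ω` (`ω ≥ 1`), if
`h = o²·c` and `ν = ω - 1`, `b₁ = (o^ν h^ν)^ω o^ν`, `e_L = o·b₁`, then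
`e_L · e_L = e_L`. -/
theorem eL_idem_monoid {M : Type*} [Monoid M] (ω ν : ℕ) (hω : 1 ≤ ω)
    (hν : ν = ω - 1) (hM : ∀ s : M, s ^ (2 * ω) = s ^ ω)
    (o h c : M) (hh : h = o ^ 2 * c)
    (b₁ eL : M) (hb₁ : b₁ = (o ^ ν * h ^ ν) ^ ω * o ^ ν) (heL : eL = o * b₁) :
    eL * eL = eL := by
  subst heL hb₁
  set x := o ^ ν * h ^ ν with hx
  have hνω : ν + 1 = ω := by omega
  rcases Nat.lt_or_ge ω 2 with h2 | h2
  · -- ω = 1, ν = 0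
    have hω1 : ω = 1 := by omega
    have hν0 : ν = 0 := by omega
    have ho : o * o = o := by
      have := hM o
      rw [hω1] at this
      simpa [pow_succ, pow_one] using this
    simp [hx, hν0, hω1, ho]
  · -- ω = k + 2, ν = k + 1
    obtain ⟨k, rfl⟩ : ∃ k, ω = k + 2 := ⟨ω - 2, by omega⟩
    have hνk : ν = k + 1 := by omega
    -- key: o^ω * x = x
    have hkey : o ^ (k + 2) * x = x := by
      have hpow : o ^ (2 * (k + 2) + 1) = o ^ (k + 3) := by
        rw [pow_succ, hM o, ← pow_succ]
      calc o ^ (k + 2) * x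
          = o ^ (k + 2) * (o ^ (k + 1) * (h * h ^ k)) := by
            rw [hx, hνk, pow_succ' h k]
        _ = o ^ (k + 2) * (o ^ (k + 1) * ((o ^ 2 * c) * h ^ k)) := by rw [hh]
        _ = o ^ (2 * (k + 2) + 1) * (c * h ^ k) := by
            rw [show 2 * (k + 2) + 1 = (k + 2) + (k + 1) + 2 by ring,
              pow_add, pow_add]
            simp [pow_add, mul_assoc, pow_one]
        _ = o ^ (k + 3) * (c * h ^ k) := by rw [hpow]
        _ = o ^ (k + 1) * ((o ^ 2 * c) * h ^ k) := by
            rw [show k + 3 = (k + 1) + 2 by ring, pow_add]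
            simp [mul_assoc]
        _ = x := by rw [← hh, hx, hνk, pow_succ' h k]
    have hkey2 : o ^ (k + 2) * x ^ (k + 2) = x ^ (k + 2) := by
      rw [pow_succ' x (k + 1), ← mul_assoc, hkey]
    -- e_L e_L = e_L
    calc o * (x ^ (k + 2) * o ^ ν) * (o * (x ^ (k + 2) * o ^ ν))
        = o * (x ^ (k + 2) * ((o ^ ν * o) * (x ^ (k + 2) * o ^ ν))) := by
          simp [mul_assoc]
      _ = o * (x ^ (k + 2) * (o ^ (k + 2) * (x ^ (k + 2) * o ^ ν))) := by
          rw [← pow_succ, hνω]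
      _ = o * (x ^ (k + 2) * (x ^ (k + 2) * o ^ ν)) := by
          rw [← mul_assoc (o ^ (k + 2)), hkey2]
      _ = o * (x ^ (2 * (k + 2)) * o ^ ν) := by
          simp [two_mul, pow_add, mul_assoc]
      _ = o * (x ^ (k + 2) * o ^ ν) := by rw [hM x]
end

section
/- Let G be a context-free grammar over Σ in Chomsky normal form and G' the BFG obtained by the paper's construction (productions N' → t for N → t; N' → ◇N₁'N₂'◇̄ for N → N₁N₂; N' → ◇E'X'◇̄ and N' → ◇X'E'◇̄ for each X; E' → ◇◇̄ and E' → ◇E'E'◇̄). Let π : (Σ ∪ {◇,◇̄})* → Σ* erase ◇ and ◇̄. Then π(L(G')) = L(G). -/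
/-- Symbols of a grammar: terminals and nonterminals. -/
inductive GSym (T N : Type*) where
  | tm (t : T) : GSym T N
  | nt (A : N) : GSym T N

/-- A grammar with terminal alphabet `T`, nonterminals `N`, a start symbol and
a set of productions `A → α`. -/
structure Grammar (T N : Type*) where
  start : N
  rules : Set (N × List (GSym T N))

/-- One derivation step: rewrite one occurrence of a nonterminal using a rule. -/
def Grammar.Step {T N : Type*} (G : Grammar T N) (u v : List (GSym T N)) : Prop :=
  ∃ A α p q, (A, α) ∈ G.rules ∧ u = p ++ [GSym.nt A] ++ q ∧ v = p ++ α ++ q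

/-- The derivation relation: reflexive-transitive closure of `Step`. -/
def Grammar.Derives {T N : Type*} (G : Grammar T N) :
    List (GSym T N) → List (GSym T N) → Prop :=
  Relation.ReflTransGen G.Step

/-- The language generated by a grammar. -/
def Grammar.lang {T N : Type*} (G : Grammar T N) : Set (List T) :=
  {w | G.Derives [GSym.nt G.start] (w.map GSym.tm)}

/-- The grammar is in Chomsky normal form: every production is `N → t` or
`N → N₁N₂`. -/
def IsCNF {T N : Type*} (G : Grammar T N) : Prop :=
  ∀ p ∈ G.rules, (∃ t, p.2 = [GSym.tm t]) ∨ (∃ A B, p.2 = [GSym.nt A, GSym.nt B])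

/-- The opening bracket `◇` as a letter of the extended alphabet `T ⊕ Bool`. -/
def od {T : Type*} : T ⊕ Bool := Sum.inr false

/-- The closing bracket `◇̄` as a letter of the extended alphabet `T ⊕ Bool`. -/
def cd {T : Type*} : T ⊕ Bool := Sum.inr true

/-- The paper's construction of a binary flattened tree grammar `G'` from a CFG `G`
in Chomsky normal form: nonterminals are `some X = X'` for nonterminals `X` of `G`
together with `none = E'`; productions are `N' → t` for `N → t`,
`N' → ◇N₁'N₂'◇̄` for `N → N₁N₂`, `X' → ◇E'X'◇̄` and `X' → ◇X'E'◇̄` for each `X`,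
and `E' → ◇◇̄`, `E' → ◇E'E'◇̄`. -/
def primed {T N : Type*} (G : Grammar T N) : Grammar (T ⊕ Bool) (Option N) where
  start := some G.start
  rules := {p |
    (∃ A t, (A, [GSym.tm t]) ∈ G.rules ∧ p = (some A, [GSym.tm (Sum.inl t)])) ∨
    (∃ A B C, (A, [GSym.nt B, GSym.nt C]) ∈ G.rules ∧
      p = (some A, [GSym.tm od, GSym.nt (some B), GSym.nt (some C), GSym.tm cd])) ∨
    (∃ X : N, p = (some X, [GSym.tm od, GSym.nt none, GSym.nt (some X), GSym.tm cd])) ∨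
    (∃ X : N, p = (some X, [GSym.tm od, GSym.nt (some X), GSym.nt none, GSym.tm cd])) ∨
    p = (none, [GSym.tm od, GSym.tm cd]) ∨
    p = (none, [GSym.tm od, GSym.nt none, GSym.nt none, GSym.tm cd])}

/-- The homomorphism erasing the bracket symbols `◇, ◇̄`. -/
def eraseBrackets {T : Type*} : List (T ⊕ Bool) → List T :=
  List.filterMap (Sum.elim some fun _ => none)

/-! Erasing brackets sends every rule of `G'` either to a rule of `G` (`N' → t`, `N' → ◇N₁'N₂'◇̄`)
or to a trivial derivation (`X' → ◇E'X'◇̄`, `X' → ◇X'E'◇̄` and the `E'`-rules, since `E'` itself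
is erased), so it maps derivations of `G'` to derivations of `G`. Conversely a parse tree of `G`
is copied into `G'` with the first two kinds of rules, which are the rules of `G` with a pair of
brackets inserted around every binary node. -/

namespace Grammar

variable {T N : Type*} {G : Grammar T N}

theorem Step.append_left {u v : List (GSym T N)} (p : List (GSym T N)) (h : G.Step u v) :
    G.Step (p ++ u) (p ++ v) := by
  obtain ⟨A, α, p', q, hr, rfl, rfl⟩ := h
  exact ⟨A, α, p ++ p', q, hr, by simp, by simp⟩

theorem Step.append_right {u v : List (GSym T N)} (q : List (GSym T N)) (h : G.Step u v) :
    G.Step (u ++ q) (v ++ q) := by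
  obtain ⟨A, α, p, q', hr, rfl, rfl⟩ := h
  exact ⟨A, α, p, q' ++ q, hr, by simp, by simp⟩

theorem Derives.append {u u' v v' : List (GSym T N)} (hu : G.Derives u u')
    (hv : G.Derives v v') : G.Derives (u ++ v) (u' ++ v') :=
  (hu.lift (· ++ v) fun _ _ => Step.append_right v).trans
    (hv.lift (u' ++ ·) fun _ _ => Step.append_left u')

theorem derives_of_mem_rules {A : N} {α : List (GSym T N)} (hr : (A, α) ∈ G.rules) :
    G.Derives [.nt A] α :=
  .single ⟨A, α, [], [], hr, rfl, by simp⟩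

theorem Derives.flatMap {T' N' : Type*} {G' : Grammar T' N'}
    {φ : GSym T N → List (GSym T' N')}
    (hφ : ∀ {A α}, (A, α) ∈ G.rules → G'.Derives (φ (.nt A)) (α.flatMap φ))
    {u v : List (GSym T N)} (h : G.Derives u v) : G'.Derives (u.flatMap φ) (v.flatMap φ) := by
  refine h.lift' _ fun u v ⟨A, α, p, q, hr, hu, hv⟩ => ?_
  subst hu hv
  simpa [Function.onFun, Derives] using
    (Derives.append .refl (hφ hr)).append (.refl : G'.Derives _ _)

/-- `G.Generates u w`: the sentential form `u` has a parse forest with yield `w`. -/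
inductive Generates (G : Grammar T N) : List (GSym T N) → List T → Prop
  | nil : G.Generates [] []
  | tm (t : T) {u : List (GSym T N)} {w : List T} :
      G.Generates u w → G.Generates (.tm t :: u) (t :: w)
  | nt {A : N} {α u : List (GSym T N)} {w₁ w₂ : List T} : (A, α) ∈ G.rules →
      G.Generates α w₁ → G.Generates u w₂ → G.Generates (.nt A :: u) (w₁ ++ w₂)

theorem Generates.append {u v : List (GSym T N)} {w₁ w₂ : List T} (hu : G.Generates u w₁)
    (hv : G.Generates v w₂) : G.Generates (u ++ v) (w₁ ++ w₂) := by
  induction hu with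
  | nil => simpa
  | tm t _ ih => simpa using ih.tm t
  | nt hr hα _ _ ih => simpa using Generates.nt hr hα ih

theorem Generates.exists_of_append {u v : List (GSym T N)} {w : List T}
    (h : G.Generates (u ++ v) w) :
    ∃ w₁ w₂, w = w₁ ++ w₂ ∧ G.Generates u w₁ ∧ G.Generates v w₂ := by
  induction u generalizing w with
  | nil => exact ⟨[], w, rfl, .nil, h⟩
  | cons s u ih =>
    cases h with
    | tm t h =>
      obtain ⟨w₁, w₂, rfl, h₁, h₂⟩ := ih h
      exact ⟨t :: w₁, w₂, rfl, h₁.tm t, h₂⟩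
    | nt hr hα h =>
      obtain ⟨w₁, w₂, rfl, h₁, h₂⟩ := ih h
      exact ⟨_ ++ w₁, w₂, (List.append_assoc _ _ _).symm, .nt hr hα h₁, h₂⟩

theorem generates_map_tm (w : List T) : G.Generates (w.map .tm) w := by
  induction w with
  | nil => exact .nil
  | cons t w ih => exact ih.tm t

theorem Generates.derives {u : List (GSym T N)} {w : List T} (h : G.Generates u w) :
    G.Derives u (w.map .tm) := by
  induction h with
  | nil => exact .refl
  | tm t _ ih => simpa using Derives.append (.refl : G.Derives [.tm t] _) ih
  | nt hr _ _ ih₁ ih₂ =>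
    rw [List.map_append]
    exact Relation.ReflTransGen.trans ((derives_of_mem_rules hr).append .refl) (ih₁.append ih₂)

/-- Context-freeness: the parts of a derivation issued from distinct symbols are independent. -/
theorem Derives.generates {u : List (GSym T N)} {w : List T} (h : G.Derives u (w.map .tm)) :
    G.Generates u w := by
  induction h using Relation.ReflTransGen.head_induction_on with
  | refl => exact generates_map_tm w
  | head hstep _ ih =>
    obtain ⟨A, α, p, q, hr, rfl, rfl⟩ := hstep
    obtain ⟨wpα, wq, rfl, hpα, hq⟩ := ih.exists_of_append
    obtain ⟨wp, wα, rfl, hp, hα⟩ := hpα.exists_of_append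
    simpa using (hp.append (Generates.nt hr hα .nil)).append hq

theorem mem_lang_iff_generates {w : List T} : w ∈ G.lang ↔ G.Generates [.nt G.start] w :=
  ⟨Derives.generates, Generates.derives⟩

end Grammar

def GSym.map {T T' N N' : Type*} (f : T → T') (g : N → N') : GSym T N → GSym T' N'
  | .tm t => .tm (f t)
  | .nt A => .nt (g A)

section Primed

variable {T N : Type*} {G : Grammar T N}

@[simp]
theorem eraseBrackets_cons_inl (t : T) (w : List (T ⊕ Bool)) :
    eraseBrackets (.inl t :: w) = t :: eraseBrackets w :=
  rfl

@[simp]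
theorem eraseBrackets_cons_inr (b : Bool) (w : List (T ⊕ Bool)) :
    eraseBrackets (.inr b :: w) = eraseBrackets w :=
  rfl

@[simp]
theorem eraseBrackets_append (w₁ w₂ : List (T ⊕ Bool)) :
    eraseBrackets (w₁ ++ w₂) = eraseBrackets w₁ ++ eraseBrackets w₂ :=
  List.filterMap_append

def unprime : GSym (T ⊕ Bool) (Option N) → List (GSym T N)
  | .tm (.inl t) => [.tm t]
  | .tm (.inr _) => []
  | .nt (some A) => [.nt A]
  | .nt none => []

theorem flatMap_unprime_map_tm (w : List (T ⊕ Bool)) :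
    (w.map GSym.tm).flatMap unprime = (eraseBrackets w).map (GSym.tm (N := N)) := by
  induction w with
  | nil => rfl
  | cons a w ih => cases a <;> simp [unprime, ih]

theorem derives_unprime_of_mem_primed_rules {A : Option N}
    {α : List (GSym (T ⊕ Bool) (Option N))} (hr : (A, α) ∈ (primed G).rules) :
    G.Derives (unprime (.nt A)) (α.flatMap unprime) := by
  rcases hr with ⟨A, t, hr, h⟩ | ⟨A, B, C, hr, h⟩ | ⟨X, h⟩ | ⟨X, h⟩ | h | h <;>
    obtain ⟨rfl, rfl⟩ := Prod.mk.inj h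
  · exact Grammar.derives_of_mem_rules hr
  · exact Grammar.derives_of_mem_rules hr
  all_goals exact .refl

theorem eraseBrackets_image_primed_lang_subset : eraseBrackets '' (primed G).lang ⊆ G.lang := by
  rintro _ ⟨w, hw, rfl⟩
  have hderiv := Grammar.Derives.flatMap (G' := G) derives_unprime_of_mem_primed_rules hw
  rwa [flatMap_unprime_map_tm] at hderiv

theorem Grammar.Generates.exists_primed (hG : IsCNF G) {u : List (GSym T N)} {w : List T}
    (h : G.Generates u w) :
    ∃ w', (primed G).Generates (u.map (GSym.map .inl some)) w' ∧ eraseBrackets w' = w := by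
  induction h with
  | nil => exact ⟨[], .nil, rfl⟩
  | tm t _ ih =>
    obtain ⟨w', hw', rfl⟩ := ih
    exact ⟨.inl t :: w', hw'.tm _, rfl⟩
  | @nt A α _ _ _ hr _ _ ih₁ ih₂ =>
    obtain ⟨w₁, hw₁, rfl⟩ := ih₁
    obtain ⟨w₂, hw₂, rfl⟩ := ih₂
    rcases hG _ hr with ⟨t, rfl : α = _⟩ | ⟨B, C, rfl : α = _⟩
    · have hr' : (some A, [GSym.tm (.inl t)]) ∈ (primed G).rules := Or.inl ⟨A, t, hr, rfl⟩
      exact ⟨w₁ ++ w₂, .nt hr' hw₁ hw₂, by simp⟩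
    · have hr' : (some A, [.tm od, .nt (some B), .nt (some C), .tm cd]) ∈ (primed G).rules :=
        Or.inr (Or.inl ⟨A, B, C, hr, rfl⟩)
      have hbracketed := (hw₁.append (Grammar.Generates.nil.tm cd)).tm od
      exact ⟨od :: (w₁ ++ [cd]) ++ w₂, .nt hr' hbracketed hw₂, by simp [od, cd]⟩

theorem lang_subset_eraseBrackets_image_primed_lang (hG : IsCNF G) :
    G.lang ⊆ eraseBrackets '' (primed G).lang := by
  intro w hw
  obtain ⟨w', hw', rfl⟩ := (Grammar.mem_lang_iff_generates.mp hw).exists_primed hG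
  exact ⟨w', Grammar.mem_lang_iff_generates.mpr hw', rfl⟩

end Primed

/-- For a CFG `G` in Chomsky normal form and the BFG `G'` given by the paper's
construction, erasing the brackets from `L(G')` yields exactly `L(G)`. -/
theorem erase_primed_lang {T N : Type*} (G : Grammar T N) (hG : IsCNF G) :
    eraseBrackets '' (primed G).lang = G.lang :=
  eraseBrackets_image_primed_lang_subset.antisymm
    (lang_subset_eraseBrackets_image_primed_lang hG)
end
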